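/- arXiv:2512.04394 — 3 statements merged into one kernel-verified Lean document; each statement's English description precedes it below -/
import Mathlib

section
/- (Commutativity of Dunkl operators.) For every real number θ > 0, every integer N ≥ 1, all indices i, j ∈ {1,…,N}, and every polynomial p ∈ ℝ[x_1,…,x_N], one has D_i(D_j p) = D_j(D_i p). -/
open MvPolynomial

noncomputable section

/-- The divided difference `Δ_{ij} p`: the unique `q` with `p - σ_{ij} p = (Xᵢ - Xⱼ) * q`. -/
def divDiff {N : ℕ} (i j : Fin N) (p : MvPolynomial (Fin N) ℝ) : MvPolynomial (Fin N) ℝ :=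
  letI := Classical.propDecidable
  if h : ∃ q, p - rename (Equiv.swap i j) p = (X i - X j) * q then h.choose else 0

/-- The Dunkl operator `D_i = ∂_i + θ · Σ_{j ≠ i} Δ_{ij}`. -/
def dunkl {N : ℕ} (θ : ℝ) (i : Fin N) (p : MvPolynomial (Fin N) ℝ) : MvPolynomial (Fin N) ℝ :=
  pderiv i p + θ • ∑ j ∈ Finset.univ.erase i, divDiff i j p

lemma sub_rename_swap_dvd {N : ℕ} (i j : Fin N) (p : MvPolynomial (Fin N) ℝ) :
    (X i - X j) ∣ p - rename (Equiv.swap i j) p := by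
  induction p using MvPolynomial.induction_on with
  | C a => simp
  | add p q hp hq =>
    have : p + q - rename (Equiv.swap i j) (p + q)
        = (p - rename (Equiv.swap i j) p) + (q - rename (Equiv.swap i j) q) := by
      rw [map_add]; ring
    rw [this]; exact dvd_add hp hq
  | mul_X p k hk =>
    have h1 : p * X k - rename (Equiv.swap i j) (p * X k)
        = (p - rename (Equiv.swap i j) p) * X k
          + rename (Equiv.swap i j) p * (X k - X (Equiv.swap i j k)) := by
      rw [map_mul, rename_X]; ring
    rw [h1]
    refine dvd_add (hk.mul_right _) (Dvd.dvd.mul_left ?_ _)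
    rcases eq_or_ne k i with rfl | hki
    · rw [Equiv.swap_apply_left]
    rcases eq_or_ne k j with rfl | hkj
    · rw [Equiv.swap_apply_right]
      exact ⟨-1, by ring⟩
    · rw [Equiv.swap_apply_of_ne_of_ne hki hkj, sub_self]; exact dvd_zero _

lemma divDiff_spec {N : ℕ} (i j : Fin N) (p : MvPolynomial (Fin N) ℝ) :
    p - rename (Equiv.swap i j) p = (X i - X j) * divDiff i j p := by
  have einst : @Equiv.swap (Fin N) (fun a b => Classical.propDecidable (a = b)) i j
      = Equiv.swap i j := by congr 1; exact Subsingleton.elim _ _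
  have h' : ∃ q, p - rename (⇑(@Equiv.swap (Fin N)
      (fun a b => Classical.propDecidable (a = b)) i j)) p = (X i - X j) * q := by
    rw [einst]; exact sub_rename_swap_dvd i j p
  have e : divDiff i j p = h'.choose := by unfold divDiff; exact dif_pos h'
  have hs := h'.choose_spec
  conv at hs => lhs; rw [einst]
  rw [e]; exact hs

lemma X_sub_X_ne_zero {N : ℕ} {i j : Fin N} (h : i ≠ j) :
    (X i - X j : MvPolynomial (Fin N) ℝ) ≠ 0 := by
  intro hc
  exact h (X_injective (sub_eq_zero.mp hc))

lemma divDiff_unique {N : ℕ} {i j : Fin N} (h : i ≠ j) {p q : MvPolynomial (Fin N) ℝ}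
    (hq : p - rename (Equiv.swap i j) p = (X i - X j) * q) : divDiff i j p = q :=
  mul_left_cancel₀ (X_sub_X_ne_zero h) (by rw [← divDiff_spec, hq])

lemma divDiff_add {N : ℕ} {i j : Fin N} (h : i ≠ j) (p q : MvPolynomial (Fin N) ℝ) :
    divDiff i j (p + q) = divDiff i j p + divDiff i j q :=
  divDiff_unique h (by
    rw [map_add]
    linear_combination divDiff_spec i j p + divDiff_spec i j q)

lemma divDiff_smul {N : ℕ} {i j : Fin N} (h : i ≠ j) (c : ℝ) (p : MvPolynomial (Fin N) ℝ) :
    divDiff i j (c • p) = c • divDiff i j p :=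
  divDiff_unique h (by
    rw [map_smul]
    simp only [smul_eq_C_mul]
    linear_combination (C c : MvPolynomial (Fin N) ℝ) * divDiff_spec i j p)

lemma divDiff_neg {N : ℕ} {i j : Fin N} (h : i ≠ j) (p : MvPolynomial (Fin N) ℝ) :
    divDiff i j (-p) = - divDiff i j p :=
  divDiff_unique h (by
    rw [map_neg]
    linear_combination - divDiff_spec i j p)

lemma divDiff_zero {N : ℕ} {i j : Fin N} (h : i ≠ j) : divDiff i j (0 : MvPolynomial (Fin N) ℝ) = 0 :=
  divDiff_unique h (by simp)

lemma divDiff_sum {N : ℕ} {i j : Fin N} (h : i ≠ j) {A : Type*} (s : Finset A)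
    (f : A → MvPolynomial (Fin N) ℝ) :
    divDiff i j (∑ x ∈ s, f x) = ∑ x ∈ s, divDiff i j (f x) := by
  classical
  induction s using Finset.induction_on with
  | empty => simpa using divDiff_zero h
  | insert _ _ hx ih =>
    rw [Finset.sum_insert hx, Finset.sum_insert hx, divDiff_add h, ih]

lemma divDiff_swap {N : ℕ} {i j : Fin N} (h : i ≠ j) (p : MvPolynomial (Fin N) ℝ) :
    divDiff j i p = - divDiff i j p :=
  divDiff_unique h.symm (by
    rw [Equiv.swap_comm]
    linear_combination divDiff_spec i j p)

lemma pderiv_pderiv_comm {N : ℕ} (i j : Fin N) (p : MvPolynomial (Fin N) ℝ) :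
    pderiv i (pderiv j p) = pderiv j (pderiv i p) := by
  rcases eq_or_ne i j with rfl | hij
  · rfl
  induction p using MvPolynomial.induction_on with
  | C a => simp
  | add p q hp hq => simp [hp, hq]
  | mul_X p k hk =>
    rcases eq_or_ne k i with rfl | hki
    · simp only [pderiv_mul, pderiv_X_self, pderiv_X_of_ne hij, map_add, pderiv_mul,
        mul_one, mul_zero, add_zero, hk]
    rcases eq_or_ne k j with rfl | hkj
    · simp only [pderiv_mul, pderiv_X_self, pderiv_X_of_ne hij.symm, map_add, pderiv_mul,
        mul_one, mul_zero, add_zero, hk]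
    · simp only [pderiv_mul, pderiv_X_of_ne hki, pderiv_X_of_ne hkj, map_add, pderiv_mul,
        mul_zero, add_zero, hk]

lemma divDiff_pderiv {N : ℕ} {i j k : Fin N} (hij : i ≠ j) (hki : k ≠ i) (hkj : k ≠ j)
    (p : MvPolynomial (Fin N) ℝ) :
    pderiv k (divDiff i j p) = divDiff i j (pderiv k p) := by
  have hswap : pderiv k (rename (⇑(Equiv.swap i j)) p)
      = rename (Equiv.swap i j) (pderiv k p) := by
    have := pderiv_rename (Equiv.injective (Equiv.swap i j)) k p
    rwa [Equiv.swap_apply_of_ne_of_ne hki hkj] at this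
  refine (divDiff_unique hij ?_).symm
  have h := congrArg (⇑(pderiv k)) (divDiff_spec i j p)
  rw [map_sub, hswap, pderiv_mul] at h
  have h0 : pderiv k (X i - X j : MvPolynomial (Fin N) ℝ) = 0 := by
    rw [map_sub, pderiv_X_of_ne hki.symm, pderiv_X_of_ne hkj.symm, sub_self]
  rw [h0, zero_mul, zero_add] at h
  exact h

lemma divDiff_pderiv_sum {N : ℕ} {i j : Fin N} (hij : i ≠ j) (p : MvPolynomial (Fin N) ℝ) :
    pderiv i (divDiff i j p) + pderiv j (divDiff i j p)
      = divDiff i j (pderiv i p + pderiv j p) := by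
  have hsi : pderiv i (rename (⇑(Equiv.swap i j)) p)
      = rename (Equiv.swap i j) (pderiv j p) := by
    have := pderiv_rename (Equiv.injective (Equiv.swap i j)) j p
    rwa [Equiv.swap_apply_right] at this
  have hsj : pderiv j (rename (⇑(Equiv.swap i j)) p)
      = rename (Equiv.swap i j) (pderiv i p) := by
    have := pderiv_rename (Equiv.injective (Equiv.swap i j)) i p
    rwa [Equiv.swap_apply_left] at this
  have hXi : pderiv i (X i - X j : MvPolynomial (Fin N) ℝ) = 1 := by
    rw [map_sub, pderiv_X_self, pderiv_X_of_ne hij.symm, sub_zero]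
  have hXj : pderiv j (X i - X j : MvPolynomial (Fin N) ℝ) = -1 := by
    rw [map_sub, pderiv_X_self, pderiv_X_of_ne hij, zero_sub]
  have ti := congrArg (⇑(pderiv i)) (divDiff_spec i j p)
  rw [map_sub, hsi, pderiv_mul, hXi] at ti
  have tj := congrArg (⇑(pderiv j)) (divDiff_spec i j p)
  rw [map_sub, hsj, pderiv_mul, hXj] at tj
  refine (divDiff_unique hij ?_).symm
  rw [map_add]
  linear_combination ti + tj

lemma key {N : ℕ} (i j k l : Fin N) (p : MvPolynomial (Fin N) ℝ) :
    (X i - X j) * ((X k - X l) * ((X (Equiv.swap i j k) - X (Equiv.swap i j l)) *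
        divDiff i j (divDiff k l p))) =
      (X (Equiv.swap i j k) - X (Equiv.swap i j l)) * (p - rename (Equiv.swap k l) p)
        - (X k - X l) * (rename (Equiv.swap i j) p
            - rename (Equiv.swap i j) (rename (Equiv.swap k l) p)) := by
  have s1 := divDiff_spec k l p
  have s2 := divDiff_spec i j (divDiff k l p)
  have s3 : rename (⇑(Equiv.swap i j)) p
        - rename (⇑(Equiv.swap i j)) (rename (⇑(Equiv.swap k l)) p)
      = (X (Equiv.swap i j k) - X (Equiv.swap i j l))
          * rename (⇑(Equiv.swap i j)) (divDiff k l p) := by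
    have h := congrArg (⇑(rename (⇑(Equiv.swap i j)) :
      MvPolynomial (Fin N) ℝ →ₐ[ℝ] MvPolynomial (Fin N) ℝ)) s1
    rw [map_sub, map_mul, map_sub, rename_X, rename_X] at h
    exact h
  linear_combination (-(X (Equiv.swap i j k) - X (Equiv.swap i j l))) * s1
    + (-((X k - X l) * (X (Equiv.swap i j k) - X (Equiv.swap i j l)))) * s2
    + (X k - X l) * s3

lemma swap_comp_aux {N : ℕ} {i j m : Fin N} (hij : i ≠ j) (him : i ≠ m) (hjm : j ≠ m) :
    (⇑(Equiv.swap i m) ∘ ⇑(Equiv.swap i j)) = (⇑(Equiv.swap i j) ∘ ⇑(Equiv.swap j m)) := by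
  funext x
  by_cases h1 : x = i <;> by_cases h2 : x = j <;> by_cases h3 : x = m <;>
    simp_all [Equiv.swap_apply_def, hij.symm, him.symm, hjm.symm]

lemma swap_comp_aux2 {N : ℕ} {i j m : Fin N} (hij : i ≠ j) (him : i ≠ m) (hjm : j ≠ m) :
    (⇑(Equiv.swap j m) ∘ ⇑(Equiv.swap i m)) = (⇑(Equiv.swap i j) ∘ ⇑(Equiv.swap j m)) := by
  funext x
  by_cases h1 : x = i <;> by_cases h2 : x = j <;> by_cases h3 : x = m <;>
    simp_all [Equiv.swap_apply_def, hij.symm, him.symm, hjm.symm]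

lemma swap_comp_aux3 {N : ℕ} {i j m : Fin N} (hij : i ≠ j) (him : i ≠ m) (hjm : j ≠ m) :
    (⇑(Equiv.swap i m) ∘ ⇑(Equiv.swap j m)) = (⇑(Equiv.swap j m) ∘ ⇑(Equiv.swap i j)) := by
  funext x
  by_cases h1 : x = i <;> by_cases h2 : x = j <;> by_cases h3 : x = m <;>
    simp_all [Equiv.swap_apply_def, hij.symm, him.symm, hjm.symm]

lemma swap_comp_aux4 {N : ℕ} {i j m : Fin N} (hij : i ≠ j) (him : i ≠ m) (hjm : j ≠ m) :
    (⇑(Equiv.swap i j) ∘ ⇑(Equiv.swap i m)) = (⇑(Equiv.swap j m) ∘ ⇑(Equiv.swap i j)) := by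
  funext x
  by_cases h1 : x = i <;> by_cases h2 : x = j <;> by_cases h3 : x = m <;>
    simp_all [Equiv.swap_apply_def, hij.symm, him.symm, hjm.symm]

lemma swap_comp_disj {N : ℕ} {i k j l : Fin N} (hij : i ≠ j) (hil : i ≠ l) (hkj : k ≠ j)
    (hkl : k ≠ l) :
    (⇑(Equiv.swap i k) ∘ ⇑(Equiv.swap j l)) = (⇑(Equiv.swap j l) ∘ ⇑(Equiv.swap i k)) := by
  funext x
  by_cases h1 : x = i <;> by_cases h2 : x = j <;> by_cases h3 : x = k <;> by_cases h4 : x = l <;>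
    simp_all [Equiv.swap_apply_def, hij.symm, hil.symm, hkj.symm, hkl.symm]

lemma core {N : ℕ} {i j m : Fin N} (hij : i ≠ j) (him : i ≠ m) (hjm : j ≠ m)
    (p : MvPolynomial (Fin N) ℝ) :
    divDiff i j (divDiff j m p) - divDiff i m (divDiff i j p) + divDiff i m (divDiff j m p)
      + divDiff i j (divDiff i m p) - divDiff j m (divDiff i j p)
      - divDiff j m (divDiff i m p) = 0 := by
  have ha := X_sub_X_ne_zero hij
  have hb := X_sub_X_ne_zero hjm
  have hc := X_sub_X_ne_zero him
  have c1 : rename (⇑(Equiv.swap i m)) (rename (⇑(Equiv.swap i j)) p)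
      = rename (⇑(Equiv.swap i j)) (rename (⇑(Equiv.swap j m)) p) := by
    rw [rename_rename, rename_rename, swap_comp_aux hij him hjm]
  have c2 : rename (⇑(Equiv.swap j m)) (rename (⇑(Equiv.swap i m)) p)
      = rename (⇑(Equiv.swap i j)) (rename (⇑(Equiv.swap j m)) p) := by
    rw [rename_rename, rename_rename, swap_comp_aux2 hij him hjm]
  have c3 : rename (⇑(Equiv.swap i m)) (rename (⇑(Equiv.swap j m)) p)
      = rename (⇑(Equiv.swap j m)) (rename (⇑(Equiv.swap i j)) p) := by
    rw [rename_rename, rename_rename, swap_comp_aux3 hij him hjm]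
  have c4 : rename (⇑(Equiv.swap i j)) (rename (⇑(Equiv.swap i m)) p)
      = rename (⇑(Equiv.swap j m)) (rename (⇑(Equiv.swap i j)) p) := by
    rw [rename_rename, rename_rename, swap_comp_aux4 hij him hjm]
  have r1 : Equiv.swap i j m = m := Equiv.swap_apply_of_ne_of_ne him.symm hjm.symm
  have r2 : Equiv.swap i m j = j := Equiv.swap_apply_of_ne_of_ne hij.symm hjm
  have r3 : Equiv.swap j m i = i := Equiv.swap_apply_of_ne_of_ne hij him
  have h1 := key i j j m p
  have h2 := key i m i j p
  have h3 := key i m j m p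
  have h4 := key i j i m p
  have h5 := key j m i j p
  have h6 := key j m i m p
  simp only [Equiv.swap_apply_left, Equiv.swap_apply_right, r1, r2, r3] at h1 h2 h3 h4 h5 h6
  rw [c1] at h2
  rw [c3] at h3
  rw [c4] at h4
  rw [c2] at h6
  have main : (X i - X j) * ((X j - X m) * ((X i - X m) *
      (divDiff i j (divDiff j m p) - divDiff i m (divDiff i j p)
        + divDiff i m (divDiff j m p) + divDiff i j (divDiff i m p)
        - divDiff j m (divDiff i j p) - divDiff j m (divDiff i m p))))
      = (X i - X j) * ((X j - X m) * ((X i - X m) * 0)) := by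
    linear_combination h1 + h2 - h3 + h4 - h5 - h6
  exact mul_left_cancel₀ hc (mul_left_cancel₀ hb (mul_left_cancel₀ ha main))

lemma divDiff_disjoint_comm {N : ℕ} {i k j l : Fin N} (hik : i ≠ k) (hjl : j ≠ l)
    (hij : i ≠ j) (hil : i ≠ l) (hkj : k ≠ j) (hkl : k ≠ l)
    (p : MvPolynomial (Fin N) ℝ) :
    divDiff i k (divDiff j l p) = divDiff j l (divDiff i k p) := by
  have ha := X_sub_X_ne_zero hik
  have hb := X_sub_X_ne_zero hjl
  have h1 := key i k j l p
  have h2 := key j l i k p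
  have r1 : Equiv.swap i k j = j := Equiv.swap_apply_of_ne_of_ne hij.symm hkj.symm
  have r2 : Equiv.swap i k l = l := Equiv.swap_apply_of_ne_of_ne hil.symm hkl.symm
  have r3 : Equiv.swap j l i = i := Equiv.swap_apply_of_ne_of_ne hij hil
  have r4 : Equiv.swap j l k = k := Equiv.swap_apply_of_ne_of_ne hkj hkl
  rw [r1, r2] at h1
  rw [r3, r4] at h2
  have ccomm : rename (⇑(Equiv.swap i k)) (rename (⇑(Equiv.swap j l)) p)
      = rename (⇑(Equiv.swap j l)) (rename (⇑(Equiv.swap i k)) p) := by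
    rw [rename_rename, rename_rename, swap_comp_disj hij hil hkj hkl]
  rw [ccomm] at h1
  have main : (X i - X k) * ((X j - X l) * ((X i - X k) * ((X j - X l) *
        divDiff i k (divDiff j l p))))
      = (X i - X k) * ((X j - X l) * ((X i - X k) * ((X j - X l) *
        divDiff j l (divDiff i k p)))) := by
    linear_combination (X i - X k) * h1 - (X j - X l) * h2
  exact mul_left_cancel₀ hb (mul_left_cancel₀ ha (mul_left_cancel₀ hb (mul_left_cancel₀ ha main)))

lemma dunkl_dunkl {N : ℕ} (θ : ℝ) (i j : Fin N) (p : MvPolynomial (Fin N) ℝ) :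
    dunkl θ i (dunkl θ j p) =
      pderiv i (pderiv j p)
      + θ • ((∑ l ∈ Finset.univ.erase j, pderiv i (divDiff j l p))
          + ∑ k ∈ Finset.univ.erase i, divDiff i k (pderiv j p))
      + (θ * θ) • ∑ k ∈ Finset.univ.erase i, ∑ l ∈ Finset.univ.erase j,
          divDiff i k (divDiff j l p) := by
  rw [dunkl, dunkl, map_add, (pderiv i).map_smul, map_sum]
  have step : ∀ k ∈ Finset.univ.erase i,
      divDiff i k (pderiv j p + θ • ∑ l ∈ Finset.univ.erase j, divDiff j l p)
      = divDiff i k (pderiv j p)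
        + θ • ∑ l ∈ Finset.univ.erase j, divDiff i k (divDiff j l p) := by
    intro k hk
    have hik : i ≠ k := (Finset.ne_of_mem_erase hk).symm
    rw [divDiff_add hik, divDiff_smul hik, divDiff_sum hik]
  rw [Finset.sum_congr rfl step, Finset.sum_add_distrib, ← Finset.smul_sum,
    smul_add, smul_add, smul_smul]
  abel

/-- Commutativity of the Dunkl operators: `D_i (D_j p) = D_j (D_i p)`. -/
theorem dunkl_comm (θ : ℝ) (hθ : 0 < θ) (N : ℕ) (hN : 1 ≤ N) (i j : Fin N)
    (p : MvPolynomial (Fin N) ℝ) :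
    dunkl θ i (dunkl θ j p) = dunkl θ j (dunkl θ i p) := by
  rcases eq_or_ne i j with rfl | hij
  · rfl
  rw [dunkl_dunkl, dunkl_dunkl]
  have himem : i ∈ Finset.univ.erase j := Finset.mem_erase.mpr ⟨hij, Finset.mem_univ i⟩
  have hjmem : j ∈ Finset.univ.erase i := Finset.mem_erase.mpr ⟨hij.symm, Finset.mem_univ j⟩
  -- E1
  have E1 : pderiv i (pderiv j p) = pderiv j (pderiv i p) := pderiv_pderiv_comm i j p
  -- E2
  have e_left : ∑ l ∈ Finset.univ.erase j, pderiv i (divDiff j l p)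
      = (∑ l ∈ Finset.univ.erase j, divDiff j l (pderiv i p))
        + (pderiv i (divDiff j i p) - divDiff j i (pderiv i p)) := by
    have h0 : ∑ l ∈ Finset.univ.erase j,
        (pderiv i (divDiff j l p) - divDiff j l (pderiv i p))
        = pderiv i (divDiff j i p) - divDiff j i (pderiv i p) := by
      refine Finset.sum_eq_single_of_mem i himem (fun l hl hli => ?_)
      have hjl : j ≠ l := (Finset.ne_of_mem_erase hl).symm
      rw [divDiff_pderiv hjl hij hli.symm, sub_self]
    rw [Finset.sum_sub_distrib] at h0
    linear_combination h0
  have e_right : ∑ l ∈ Finset.univ.erase i, pderiv j (divDiff i l p)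
      = (∑ l ∈ Finset.univ.erase i, divDiff i l (pderiv j p))
        + (pderiv j (divDiff i j p) - divDiff i j (pderiv j p)) := by
    have h0 : ∑ l ∈ Finset.univ.erase i,
        (pderiv j (divDiff i l p) - divDiff i l (pderiv j p))
        = pderiv j (divDiff i j p) - divDiff i j (pderiv j p) := by
      refine Finset.sum_eq_single_of_mem j hjmem (fun l hl hlj => ?_)
      have hil : i ≠ l := (Finset.ne_of_mem_erase hl).symm
      rw [divDiff_pderiv hil hij.symm hlj.symm, sub_self]
    rw [Finset.sum_sub_distrib] at h0
    linear_combination h0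
  have D : pderiv i (divDiff j i p) - divDiff j i (pderiv i p)
      = pderiv j (divDiff i j p) - divDiff i j (pderiv j p) := by
    rw [divDiff_swap hij, divDiff_swap hij, map_neg]
    have hs := divDiff_pderiv_sum hij p
    have hadd := divDiff_add hij (pderiv i p) (pderiv j p)
    linear_combination - hs - hadd
  have E2 : (∑ l ∈ Finset.univ.erase j, pderiv i (divDiff j l p))
        + ∑ k ∈ Finset.univ.erase i, divDiff i k (pderiv j p)
      = (∑ l ∈ Finset.univ.erase i, pderiv j (divDiff i l p))
        + ∑ k ∈ Finset.univ.erase j, divDiff j k (pderiv i p) := by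
    rw [e_left, e_right, D]
    ring
  -- E3
  have E3 : ∑ k ∈ Finset.univ.erase i, ∑ l ∈ Finset.univ.erase j, divDiff i k (divDiff j l p)
      = ∑ k ∈ Finset.univ.erase j, ∑ l ∈ Finset.univ.erase i, divDiff j k (divDiff i l p) := by
    have hC : ∑ k ∈ Finset.univ.erase i, ∑ l ∈ Finset.univ.erase j,
        (divDiff i k (divDiff j l p) - divDiff j l (divDiff i k p)) = 0 := by
      set M : Finset (Fin N) := (Finset.univ.erase i).erase j with hM
      have hjM : j ∉ M := Finset.notMem_erase _ _
      have hiM : i ∉ M := by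
        intro h
        exact (Finset.ne_of_mem_erase (Finset.mem_of_mem_erase h)) rfl
      have hEi : Finset.univ.erase i = insert j M := (Finset.insert_erase hjmem).symm
      have hEj : Finset.univ.erase j = insert i M := by
        rw [hM, Finset.erase_right_comm]
        exact (Finset.insert_erase himem).symm
      have hmem_ne : ∀ m ∈ M, i ≠ m ∧ j ≠ m := by
        intro m hm
        constructor
        · exact (Finset.ne_of_mem_erase (Finset.mem_of_mem_erase hm)).symm
        · exact (Finset.ne_of_mem_erase hm).symm
      rw [hEi, hEj, Finset.sum_insert hjM]
      have inner_j : ∑ l ∈ insert i M,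
          (divDiff i j (divDiff j l p) - divDiff j l (divDiff i j p))
          = (divDiff i j (divDiff j i p) - divDiff j i (divDiff i j p))
            + ∑ l ∈ M, (divDiff i j (divDiff j l p) - divDiff j l (divDiff i j p)) :=
        Finset.sum_insert hiM
      have hji0 : divDiff i j (divDiff j i p) - divDiff j i (divDiff i j p) = 0 := by
        rw [divDiff_swap hij p, divDiff_swap hij (divDiff i j p), divDiff_neg hij, sub_self]
      have inner_k : ∀ k ∈ M, ∑ l ∈ insert i M,
          (divDiff i k (divDiff j l p) - divDiff j l (divDiff i k p))
          = (divDiff i k (divDiff j i p) - divDiff j i (divDiff i k p))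
            + ∑ l ∈ M, (divDiff i k (divDiff j l p) - divDiff j l (divDiff i k p)) :=
        fun k _ => Finset.sum_insert hiM
      have diag : ∀ k ∈ M, ∑ l ∈ M,
          (divDiff i k (divDiff j l p) - divDiff j l (divDiff i k p))
          = divDiff i k (divDiff j k p) - divDiff j k (divDiff i k p) := by
        intro k hk
        obtain ⟨hik, hjk⟩ := hmem_ne k hk
        refine Finset.sum_eq_single_of_mem k hk (fun l hl hlk => ?_)
        obtain ⟨hil, hjl⟩ := hmem_ne l hl
        rw [divDiff_disjoint_comm hik hjl hij hil hjk.symm hlk.symm, sub_self]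
      rw [inner_j, hji0, zero_add, Finset.sum_congr rfl inner_k, Finset.sum_add_distrib,
        Finset.sum_congr rfl diag]
      rw [← Finset.sum_add_distrib, ← Finset.sum_add_distrib]
      refine Finset.sum_eq_zero (fun m hm => ?_)
      obtain ⟨him, hjm⟩ := hmem_ne m hm
      have hcore := core hij him hjm p
      rw [divDiff_swap hij p, divDiff_swap hij (divDiff i m p), divDiff_neg him]
      linear_combination hcore
    have hswap : ∑ k ∈ Finset.univ.erase j, ∑ l ∈ Finset.univ.erase i,
        divDiff j k (divDiff i l p)
        = ∑ k ∈ Finset.univ.erase i, ∑ l ∈ Finset.univ.erase j,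
          divDiff j l (divDiff i k p) := Finset.sum_comm
    rw [hswap]
    have hsplit : ∑ k ∈ Finset.univ.erase i, ∑ l ∈ Finset.univ.erase j,
        (divDiff i k (divDiff j l p) - divDiff j l (divDiff i k p))
        = (∑ k ∈ Finset.univ.erase i, ∑ l ∈ Finset.univ.erase j, divDiff i k (divDiff j l p))
          - ∑ k ∈ Finset.univ.erase i, ∑ l ∈ Finset.univ.erase j,
              divDiff j l (divDiff i k p) := by
      rw [← Finset.sum_sub_distrib]
      exact Finset.sum_congr rfl fun k _ => Finset.sum_sub_distrib _ _
    rw [hsplit] at hC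
    exact sub_eq_zero.mp hC
  rw [E1, E2, E3]

end
end

section
/- (Moment–free cumulant correspondence via Lukasiewicz paths, final assertion of the Main Theorem.) The map sending a sequence of real numbers κ = (κ_d)_{d≥1} to the sequence (m_k(κ))_{k≥1} is a bijection from the set of real sequences indexed by positive integers onto itself; in particular, the sequences (m_k)_{k≥1} and (κ_d)_{d≥1} related by the Lukasiewicz path formula uniquely determine each other. -/
noncomputable section

/-- Step sequences of Lukasiewicz paths of length `k`: each step is `(1, d)` with `d ≥ -1`
(a step of a path of length `k` is never larger than `k`), the path ends at height `0` and
never goes below the horizontal axis. -/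
def LukSteps (k : ℕ) : Finset (Fin k → ℤ) :=
  (Fintype.piFinset fun _ : Fin k => Finset.Icc (-1 : ℤ) k).filter
    (fun f => (∑ i, f i) = 0 ∧
      ∀ j : Fin k, 0 ≤ ∑ i ∈ Finset.univ.filter (fun i => i ≤ j), f i)

/-- `m_k(κ) = Σ_{Γ ∈ L(k)} Π_{d ≥ 1} κ_d ^ (number of steps (1, d-1) of Γ)`. -/
def lukMoment (κ : ℕ → ℝ) (k : ℕ) : ℝ :=
  ∑ f ∈ LukSteps k, ∏ d ∈ Finset.Icc 1 k,
    κ d ^ (Finset.univ.filter fun i => f i = (d : ℤ) - 1).card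

namespace LukAux

/-- The unique Lukasiewicz path of length `k` containing a step of size `k-1`. -/
def f0 (k : ℕ) : Fin k → ℤ := fun i => if (i : ℕ) = 0 then (k : ℤ) - 1 else -1

lemma sum_f0 {k : ℕ} (hk : 0 < k) (s : Finset (Fin k)) (ha : (⟨0, hk⟩ : Fin k) ∈ s) :
    ∑ i ∈ s, f0 k i = (k : ℤ) - s.card := by
  have h : ∀ i : Fin k, f0 k i = (-1 : ℤ) + (if i = ⟨0, hk⟩ then (k : ℤ) else 0) := by
    intro i
    rcases eq_or_ne (i : ℕ) 0 with h | h <;> simp [f0, Fin.ext_iff, h] <;> ring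
  rw [Finset.sum_congr rfl fun i _ => h i, Finset.sum_add_distrib, Finset.sum_const,
    Finset.sum_ite_eq' s _ (fun _ => (k : ℤ)), if_pos ha]
  push_cast; ring

lemma f0_mem {k : ℕ} (hk : 0 < k) : f0 k ∈ LukSteps k := by
  refine Finset.mem_filter.2 ⟨Fintype.mem_piFinset.2 fun i => ?_, ?_, ?_⟩
  · simp only [f0]
    split <;> (rw [Finset.mem_Icc]; constructor <;> omega)
  · rw [sum_f0 hk _ (Finset.mem_univ _), Finset.card_univ, Fintype.card_fin]
    ring
  · intro j
    have hmem : (⟨0, hk⟩ : Fin k) ∈ Finset.univ.filter (fun i => i ≤ j) := by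
      have hle : (⟨0, hk⟩ : Fin k) ≤ j := by rw [Fin.le_def]; exact Nat.zero_le _
      exact Finset.mem_filter.2 ⟨Finset.mem_univ _, hle⟩
    rw [sum_f0 hk _ hmem]
    have hcard : (Finset.univ.filter (fun i => i ≤ j)).card ≤ k := by
      have := Finset.card_le_univ (Finset.univ.filter (fun i => i ≤ j))
      simpa using this
    have : ((Finset.univ.filter (fun i => i ≤ j)).card : ℤ) ≤ (k : ℤ) := by exact_mod_cast hcard
    linarith

lemma eq_f0 {k : ℕ} (hk : 0 < k) {f : Fin k → ℤ} (hf : f ∈ LukSteps k)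
    {i0 : Fin k} (hi0 : f i0 = (k : ℤ) - 1) : f = f0 k := by
  obtain ⟨hbox, hsum, hpre⟩ := Finset.mem_filter.1 hf
  have hbox' : ∀ i, -1 ≤ f i := fun i => (Finset.mem_Icc.1 (Fintype.mem_piFinset.1 hbox i)).1
  have hall : ∀ i ∈ Finset.univ.erase i0, f i = -1 := by
    have hadd := Finset.add_sum_erase Finset.univ f (Finset.mem_univ i0)
    have hcard : (Finset.univ.erase i0).card = k - 1 := by
      rw [Finset.card_erase_of_mem (Finset.mem_univ _), Finset.card_univ, Fintype.card_fin]
    have hzero : ∑ i ∈ Finset.univ.erase i0, (f i + 1) = 0 := by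
      have h1 : ∑ i ∈ Finset.univ.erase i0, f i = 1 - (k : ℤ) := by
        rw [hsum, hi0] at hadd; linarith
      rw [Finset.sum_add_distrib, Finset.sum_const, hcard, h1]
      simp only [nsmul_eq_mul, mul_one]
      omega
    intro i hi
    have hnn : ∀ i ∈ Finset.univ.erase i0, 0 ≤ f i + 1 := fun i _ => by linarith [hbox' i]
    have := (Finset.sum_eq_zero_iff_of_nonneg hnn).1 hzero i hi
    linarith
  have hi00 : (i0 : ℕ) = 0 := by
    by_contra hne
    have h0 := hpre ⟨0, hk⟩
    have hset : Finset.univ.filter (fun i => i ≤ (⟨0, hk⟩ : Fin k)) = {(⟨0, hk⟩ : Fin k)} := by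
      ext i
      simp only [Finset.mem_filter, Finset.mem_univ, true_and, Finset.mem_singleton,
        Fin.le_def, Fin.ext_iff]
      omega
    rw [hset, Finset.sum_singleton] at h0
    have hfz : f ⟨0, hk⟩ = -1 := by
      refine hall _ (Finset.mem_erase.2 ⟨?_, Finset.mem_univ _⟩)
      simp [Fin.ext_iff]; omega
    linarith
  funext i
  rcases eq_or_ne i i0 with rfl | hne
  · simp [f0, hi00, hi0]
  · have h1 : f i = -1 := hall _ (Finset.mem_erase.2 ⟨hne, Finset.mem_univ _⟩)
    have h2 : (i : ℕ) ≠ 0 := by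
      intro h
      exact hne (Fin.ext (by rw [h, hi00]))
    simp [f0, h2, h1]

lemma prod_f0 {k : ℕ} (hk : 0 < k) (κ : ℕ → ℝ) :
    (∏ d ∈ Finset.Icc 1 k,
      κ d ^ (Finset.univ.filter fun i => f0 k i = (d : ℤ) - 1).card) = κ k := by
  rw [Finset.prod_eq_single k]
  · have hset : (Finset.univ.filter fun i => f0 k i = (k : ℤ) - 1) = {(⟨0, hk⟩ : Fin k)} := by
      ext i
      simp only [Finset.mem_filter, Finset.mem_univ, true_and, Finset.mem_singleton, f0,
        Fin.ext_iff]
      rcases eq_or_ne (i : ℕ) 0 with h | h <;> simp [h] <;> omega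
    rw [hset, Finset.card_singleton, pow_one]
  · intro d hd hdk
    obtain ⟨h1, h2⟩ := Finset.mem_Icc.1 hd
    have hset : (Finset.univ.filter fun i => f0 k i = (d : ℤ) - 1) = ∅ := by
      rw [Finset.filter_eq_empty_iff]
      intro i _
      simp only [f0]
      rcases eq_or_ne (i : ℕ) 0 with h | h <;> simp [h] <;> [skip; omega]
      intro hc
      have : d = k := by omega
      exact hdk this
    rw [hset, Finset.card_empty, pow_zero]
  · intro h
    exact absurd (Finset.mem_Icc.2 ⟨hk, le_refl k⟩) h

lemma prod_congr_of_ne_f0 {k : ℕ} (hk : 0 < k) {f : Fin k → ℤ} (hf : f ∈ LukSteps k)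
    (hne : f ≠ f0 k) {κ κ' : ℕ → ℝ} (h : ∀ d, 0 < d → d < k → κ d = κ' d) :
    (∏ d ∈ Finset.Icc 1 k, κ d ^ (Finset.univ.filter fun i => f i = (d : ℤ) - 1).card) =
    ∏ d ∈ Finset.Icc 1 k, κ' d ^ (Finset.univ.filter fun i => f i = (d : ℤ) - 1).card := by
  refine Finset.prod_congr rfl fun d hd => ?_
  obtain ⟨h1, h2⟩ := Finset.mem_Icc.1 hd
  rcases eq_or_ne d k with rfl | hdk
  · have hset : (Finset.univ.filter fun i => f i = (d : ℤ) - 1) = ∅ := by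
      rw [Finset.filter_eq_empty_iff]
      intro i _
      intro hc
      exact hne (eq_f0 hk hf hc)
    rw [hset, Finset.card_empty, pow_zero, pow_zero]
  · rw [h d h1 (lt_of_le_of_ne h2 hdk)]

lemma lukMoment_sub {k : ℕ} (hk : 0 < k) {κ κ' : ℕ → ℝ}
    (h : ∀ d, 0 < d → d < k → κ d = κ' d) :
    lukMoment κ k - κ k = lukMoment κ' k - κ' k := by
  have e : ∀ μ : ℕ → ℝ, lukMoment μ k = μ k + ∑ f ∈ (LukSteps k).erase (f0 k),
      ∏ d ∈ Finset.Icc 1 k, μ d ^ (Finset.univ.filter fun i => f i = (d : ℤ) - 1).card := by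
    intro μ
    rw [lukMoment, ← Finset.add_sum_erase _ _ (f0_mem hk), prod_f0 hk]
  rw [e κ, e κ']
  have hsum : (∑ f ∈ (LukSteps k).erase (f0 k),
      ∏ d ∈ Finset.Icc 1 k, κ d ^ (Finset.univ.filter fun i => f i = (d : ℤ) - 1).card) =
      ∑ f ∈ (LukSteps k).erase (f0 k),
      ∏ d ∈ Finset.Icc 1 k, κ' d ^ (Finset.univ.filter fun i => f i = (d : ℤ) - 1).card := by
    refine Finset.sum_congr rfl fun f hf => ?_
    obtain ⟨hne, hmem⟩ := Finset.mem_erase.1 hf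
    exact prod_congr_of_ne_f0 hk hmem hne h
  rw [hsum]
  ring

/-- The inverse map, defined by strong recursion. -/
def lukInv (m : ℕ+ → ℝ) : ℕ → ℝ
  | n =>
    if h : 0 < n then
      m ⟨n, h⟩ - lukMoment (fun d => if _ : d < n then lukInv m d else 0) n
    else 0
termination_by n => n

end LukAux

/-- The moment–free cumulant correspondence via Lukasiewicz paths is a bijection on real
sequences indexed by the positive integers. -/
theorem lukMoment_bijective :
    Function.Bijective (fun κ : ℕ+ → ℝ =>
      fun k : ℕ+ => lukMoment (fun d => if h : 0 < d then κ ⟨d, h⟩ else 0) (k : ℕ)) := by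
  constructor
  · intro κ κ' h
    have key : ∀ n : ℕ, ∀ hn : 0 < n, κ ⟨n, hn⟩ = κ' ⟨n, hn⟩ := by
      intro n
      induction n using Nat.strong_induction_on with
      | _ n ih =>
        intro hn
        have hagree : ∀ d, 0 < d → d < n →
            (if h : 0 < d then κ ⟨d, h⟩ else 0) = (if h : 0 < d then κ' ⟨d, h⟩ else 0) := by
          intro d hd hdn
          rw [dif_pos hd, dif_pos hd, ih d hdn hd]
        have hk := LukAux.lukMoment_sub hn hagree
        have hm : lukMoment (fun d => if h : 0 < d then κ ⟨d, h⟩ else 0) n =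
            lukMoment (fun d => if h : 0 < d then κ' ⟨d, h⟩ else 0) n := by
          have := congrFun h (⟨n, hn⟩ : ℕ+)
          simpa using this
        rw [hm] at hk
        have : (if h : 0 < n then κ ⟨n, h⟩ else 0) = (if h : 0 < n then κ' ⟨n, h⟩ else 0) := by
          linarith
        rwa [dif_pos hn, dif_pos hn] at this
    funext n
    obtain ⟨n, hn⟩ := n
    exact key n hn
  · intro m
    refine ⟨fun j => LukAux.lukInv m j, ?_⟩
    funext k
    obtain ⟨n, hn⟩ := k
    simp only
    have hagree : ∀ d, 0 < d → d < n →
        (if h : 0 < d then LukAux.lukInv m ((⟨d, h⟩ : ℕ+) : ℕ) else 0) =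
        (if _ : d < n then LukAux.lukInv m d else 0) := by
      intro d hd hdn
      rw [dif_pos hd, dif_pos hdn]
    have hk := LukAux.lukMoment_sub hn hagree
    rw [dif_neg (lt_irrefl n), dif_pos hn] at hk
    have hdef : LukAux.lukInv m n =
        m ⟨n, hn⟩ - lukMoment (fun d => if _ : d < n then LukAux.lukInv m d else 0) n := by
      rw [LukAux.lukInv, dif_pos hn]
    have hgoal : lukMoment
        (fun d => if h : 0 < d then LukAux.lukInv m ((⟨d, h⟩ : ℕ+) : ℕ) else 0) n =
        m ⟨n, hn⟩ := by linarith [hk, hdef]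
    exact hgoal

end
end

section
/- (One-variable transfer identity underlying Step 5 of the proof of the 'if' direction.) Fix an integer k ≥ 1, a real number c, and real numbers a_1,…,a_k. Let U be the linear operator on ℝ[x] given by multiplication by the polynomial Σ_{d=1}^{k} d·a_d·x^{d−1}, and let L be the linear operator on ℝ[x] determined by L(x^m) = x^{m−1} for m ≥ 1 and L(1) = 0. Then the constant term of (U + c·L)^k applied to the constant polynomial 1 equals Σ_{Γ∈L(k)} ∏_{d=1}^{k} (d·a_d)^{n_d(Γ)} · c^{n_0(Γ)}, where n_d(Γ) is the number of steps (1,d−1) in Γ and n_0(Γ) is the number of steps (1,−1) in Γ. -/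
noncomputable section

namespace TransferAux

variable (k : ℕ) (c : ℝ) (a : ℕ → ℝ)

/-- weight of a single step -/
def w : ℤ → ℝ :=
  fun e => if e = -1 then c else
    ∑ d ∈ Finset.Icc 1 k, if (d : ℤ) - 1 = e then (d : ℝ) * a d else 0

/-- partial paths of length j ending at height h -/
def S (j : ℕ) (h : ℤ) : Finset (Fin j → ℤ) :=
  (Fintype.piFinset fun _ : Fin j => Finset.Icc (-1 : ℤ) k).filter
    (fun f => (∑ i, f i) = h ∧
      ∀ j' : Fin j, 0 ≤ ∑ i ∈ Finset.univ.filter (fun i => i ≤ j'), f i)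

def pathSum (j : ℕ) (h : ℤ) : ℝ := ∑ f ∈ S k j h, ∏ i, w k c a (f i)

lemma S_k_zero : S k k 0 = LukSteps k := rfl

lemma S_neg {j : ℕ} {h : ℤ} (hh : h < 0) : S k j h = ∅ := by
  rw [Finset.eq_empty_iff_forall_notMem]
  rintro f hf
  rw [S, Finset.mem_filter] at hf
  obtain ⟨-, hsum, hpre⟩ := hf
  rcases Nat.eq_zero_or_pos j with rfl | hj
  · simp at hsum; omega
  · have := hpre (Fin.last (j - 1) |>.cast (by omega))
    have he : (Finset.univ.filter (fun i : Fin j => i ≤ (Fin.last (j-1)).cast (by omega))) =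
        Finset.univ := by
      ext i; simp [Fin.le_def]; omega
    rw [he, hsum] at this; omega

lemma pathSum_zero (h : ℤ) : pathSum k c a 0 h = if h = 0 then 1 else 0 := by
  rcases eq_or_ne h 0 with rfl | hh
  · rw [pathSum, if_pos rfl]
    have : S k 0 0 = {(default : Fin 0 → ℤ)} := by
      ext f
      constructor
      · intro _; simp [Subsingleton.elim f default]
      · intro _
        simp only [S, Finset.mem_filter, Fintype.mem_piFinset]
        exact ⟨fun i => i.elim0, by simp, fun j' => j'.elim0⟩
    rw [this]; simp
  · rw [pathSum, if_neg hh]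
    have : S k 0 h = ∅ := by
      rw [Finset.eq_empty_iff_forall_notMem]
      intro f hf
      rw [S, Finset.mem_filter] at hf
      obtain ⟨-, hsum, -⟩ := hf
      simp at hsum
      exact hh hsum.symm
    rw [this]; simp

/-- prefix sums of snoc at a castSucc index -/
lemma prefix_snoc {j : ℕ} (f : Fin j → ℤ) (e : ℤ) (j'' : Fin j) :
    ∑ i ∈ Finset.univ.filter (fun i => i ≤ Fin.castSucc j''), (Fin.snoc f e : Fin (j+1) → ℤ) i
      = ∑ i ∈ Finset.univ.filter (fun i => i ≤ j''), f i := by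
  have hset : Finset.univ.filter (fun i : Fin (j+1) => i ≤ Fin.castSucc j'')
      = (Finset.univ.filter (fun i : Fin j => i ≤ j'')).map Fin.castSuccEmb := by
    ext i
    simp only [Finset.mem_filter, Finset.mem_univ, true_and, Finset.mem_map]
    constructor
    · intro hle
      have hlt : i.val < j := by
        have := lt_of_le_of_lt hle (Fin.castSucc_lt_last j'')
        simpa [Fin.lt_def] using this
      refine ⟨⟨i.val, hlt⟩, ?_, ?_⟩
      · simpa [Fin.le_def] using hle
      · exact Fin.ext rfl
    · rintro ⟨i', hi', rfl⟩
      have h2 : i' ≤ j'' := hi'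
      show Fin.castSucc i' ≤ Fin.castSucc j''
      exact Fin.castSucc_le_castSucc_iff.mpr h2
  rw [hset, Finset.sum_map]
  refine Finset.sum_congr rfl fun i _ => ?_
  show (Fin.snoc f e : Fin (j+1) → ℤ) (Fin.castSucc i) = f i
  exact @Fin.snoc_castSucc j (fun _ => ℤ) e f i

lemma mem_S_snoc {j : ℕ} (f : Fin j → ℤ) (e : ℤ) (h : ℤ) :
    (Fin.snoc f e : Fin (j+1) → ℤ) ∈ S k (j+1) h
      ↔ e ∈ Finset.Icc (-1 : ℤ) k ∧ 0 ≤ h ∧ f ∈ S k j (h - e) := by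
  have hlastset : (Finset.univ.filter (fun i : Fin (j+1) => i ≤ Fin.last j)) = Finset.univ := by
    ext i; simp [Fin.le_last]
  have hsnocsum : (∑ i, (Fin.snoc f e : Fin (j+1) → ℤ) i) = (∑ i, f i) + e := Fin.sum_snoc e f
  simp only [S, Finset.mem_filter, Fintype.mem_piFinset]
  constructor
  · rintro ⟨hpi, hs, hpre⟩
    have he : e ∈ Finset.Icc (-1:ℤ) k := by
      have := hpi (Fin.last j); rwa [Fin.snoc_last] at this
    have hh : 0 ≤ h := by
      have := hpre (Fin.last j)
      rwa [hlastset, hs] at this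
    refine ⟨he, hh, ?_, ?_, ?_⟩
    · intro i; have := hpi (Fin.castSucc i)
      rwa [@Fin.snoc_castSucc j (fun _ => ℤ) e f i] at this
    · rw [hsnocsum] at hs; omega
    · intro j''; have := hpre (Fin.castSucc j''); rwa [prefix_snoc f e j''] at this
  · rintro ⟨he, hh, hpi, hs, hpre⟩
    refine ⟨?_, ?_, ?_⟩
    · intro i
      refine Fin.lastCases ?_ ?_ i
      · rwa [Fin.snoc_last]
      · intro i'; rw [@Fin.snoc_castSucc j (fun _ => ℤ) e f i']; exact hpi i'
    · rw [hsnocsum, hs]; ring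
    · intro j'
      refine Fin.lastCases ?_ ?_ j'
      · rw [hlastset, hsnocsum, hs]; omega
      · intro j''; rw [prefix_snoc f e j'']; exact hpre j''

lemma pathSum_succ (j : ℕ) (h : ℤ) (hh : 0 ≤ h) :
    pathSum k c a (j+1) h = ∑ e ∈ Finset.Icc (-1 : ℤ) k, w k c a e * pathSum k c a j (h - e) := by
  simp_rw [pathSum, Finset.mul_sum]
  rw [Finset.sum_sigma' (Finset.Icc (-1:ℤ) (k:ℤ)) (fun e => S k j (h - e))
    (fun e f => w k c a e * ∏ i, w k c a (f i))]
  refine (Finset.sum_bij' (i := fun p _ => (Fin.snoc p.2 p.1 : Fin (j+1) → ℤ))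
    (j := fun g _ => (⟨g (Fin.last j), Fin.init g⟩ : (_ : ℤ) × (Fin j → ℤ)))
    ?_ ?_ ?_ ?_ ?_).symm
  · rintro ⟨e, f⟩ hp
    simp only [Finset.mem_sigma] at hp
    exact (mem_S_snoc k f e h).mpr ⟨hp.1, hh, hp.2⟩
  · intro g hg
    have hsnoc : (Fin.snoc (Fin.init g) (g (Fin.last j)) : Fin (j+1) → ℤ) = g :=
      Fin.snoc_init_self g
    rw [Finset.mem_sigma]
    have := (mem_S_snoc k (Fin.init g) (g (Fin.last j)) h).mp (by rwa [hsnoc])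
    exact ⟨this.1, this.2.2⟩
  · rintro ⟨e, f⟩ hp
    simp
  · intro g hg
    exact Fin.snoc_init_self g
  · rintro ⟨e, f⟩ hp
    rw [Fin.prod_univ_castSucc]
    simp [mul_comm]

lemma pathSum_neg {j : ℕ} {h : ℤ} (hh : h < 0) : pathSum k c a j h = 0 := by
  rw [pathSum, S_neg k hh, Finset.sum_empty]

def T (p : Polynomial ℝ) : Polynomial ℝ :=
  (∑ d ∈ Finset.Icc 1 k, ((d : ℝ) * a d) • Polynomial.X ^ (d - 1)) * p + c • p.divX

lemma coeff_T (p : Polynomial ℝ) (h : ℕ) :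
    (T k c a p).coeff h
      = (∑ d ∈ Finset.Icc 1 k, ((d : ℝ) * a d) *
          (if d - 1 ≤ h then p.coeff (h - (d - 1)) else 0)) + c * p.coeff (h + 1) := by
  rw [T, Polynomial.coeff_add, Polynomial.coeff_smul, Polynomial.coeff_divX, Finset.sum_mul,
    Polynomial.finset_sum_coeff, smul_eq_mul]
  congr 1
  refine Finset.sum_congr rfl fun d hd => ?_
  rw [smul_mul_assoc, Polynomial.coeff_smul, smul_eq_mul,
    (Polynomial.commute_X_pow p (d - 1)).eq, Polynomial.coeff_mul_X_pow']

lemma w_neg_one : w k c a (-1) = c := by rw [w, if_pos rfl]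

lemma hsplit : Finset.Icc (-1 : ℤ) (k : ℤ) = insert (-1) (Finset.Icc 0 (k : ℤ)) := by
  ext e
  simp only [Finset.mem_Icc, Finset.mem_insert]
  omega

lemma coeff_iter (j : ℕ) (h : ℕ) :
    ((T k c a)^[j] 1).coeff h = pathSum k c a j (h : ℤ) := by
  induction j generalizing h with
  | zero =>
    simp only [Function.iterate_zero, id_eq, Polynomial.coeff_one, pathSum_zero]
    simp [Nat.cast_eq_zero, eq_comm]
  | succ j ih =>
    rw [Function.iterate_succ_apply', coeff_T,
      pathSum_succ k c a j (h : ℤ) (Int.ofNat_nonneg h),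
      hsplit, Finset.sum_insert (by simp)]
    have hc : c * ((T k c a)^[j] 1).coeff (h + 1)
        = w k c a (-1) * pathSum k c a j ((h : ℤ) - (-1)) := by
      rw [w_neg_one, ih (h + 1)]
      norm_num
    have hd : (∑ d ∈ Finset.Icc 1 k, ((d : ℝ) * a d) *
          (if d - 1 ≤ h then ((T k c a)^[j] 1).coeff (h - (d - 1)) else 0))
        = ∑ e ∈ Finset.Icc (0 : ℤ) (k : ℤ), w k c a e * pathSum k c a j ((h : ℤ) - e) := by
      have step1 : ∀ e ∈ Finset.Icc (0 : ℤ) (k : ℤ),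
          w k c a e * pathSum k c a j ((h : ℤ) - e)
            = ∑ d ∈ Finset.Icc 1 k,
                (if (d : ℤ) - 1 = e then ((d : ℝ) * a d) * pathSum k c a j ((h : ℤ) - e) else 0) := by
        intro e he
        rw [Finset.mem_Icc] at he
        rw [w, if_neg (by omega), Finset.sum_mul]
        refine Finset.sum_congr rfl fun d hd => ?_
        rw [ite_mul, zero_mul]
      rw [Finset.sum_congr rfl step1, Finset.sum_comm]
      refine Finset.sum_congr rfl fun d hd' => ?_
      rw [Finset.mem_Icc] at hd'
      have hmem : ((d:ℤ) - 1) ∈ Finset.Icc (0:ℤ) (k:ℤ) := by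
        rw [Finset.mem_Icc]; omega
      rw [Finset.sum_ite_eq (Finset.Icc (0:ℤ) (k:ℤ)) ((d:ℤ) - 1)
        (fun e => ((d : ℝ) * a d) * pathSum k c a j ((h : ℤ) - e)), if_pos hmem]
      by_cases hle : d - 1 ≤ h
      · rw [if_pos hle, ih (h - (d - 1))]
        congr 2
        omega
      · rw [if_neg hle,
          pathSum_neg k c a (show (h:ℤ) - ((d:ℤ) - 1) < 0 by omega), mul_zero]
    rw [hc, hd, add_comm]

lemma no_step_k {k : ℕ} {f : Fin k → ℤ} (hf : f ∈ LukSteps k) (i : Fin k) : f i ≠ (k : ℤ) := by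
  rw [LukSteps, Finset.mem_filter, Fintype.mem_piFinset] at hf
  obtain ⟨hpi, hsum, -⟩ := hf
  intro hik
  have hk1 : 1 ≤ k := i.pos
  have hb : ∀ x ∈ Finset.univ.erase i, (-1 : ℤ) ≤ f x :=
    fun x _ => (Finset.mem_Icc.mp (hpi x)).1
  have hcard : (Finset.univ.erase i).card = k - 1 := by
    rw [Finset.card_erase_of_mem (Finset.mem_univ i)]; simp
  have hadd : (∑ x ∈ Finset.univ.erase i, f x) + f i = ∑ x, f x :=
    Finset.sum_erase_add Finset.univ f (Finset.mem_univ i)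
  have hlb : ((Finset.univ.erase i).card : ℤ) • (-1 : ℤ) ≤ ∑ x ∈ Finset.univ.erase i, f x := by
    exact_mod_cast Finset.card_nsmul_le_sum _ _ _ hb
  rw [hcard, smul_eq_mul] at hlb
  omega

lemma w_step (d : ℕ) (hd : d ∈ Finset.Icc 1 k) : w k c a ((d : ℤ) - 1) = (d : ℝ) * a d := by
  rw [Finset.mem_Icc] at hd
  rw [w, if_neg (by omega), Finset.sum_eq_single d]
  · rw [if_pos rfl]
  · intro d' hd' hne
    rw [if_neg (fun hcontra => hne (by omega))]
  · intro hnot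
    exact absurd (Finset.mem_Icc.mpr hd) hnot

lemma himg (hk : 1 ≤ k) : Finset.Icc (0 : ℤ) (k : ℤ)
    = insert (k : ℤ) ((Finset.Icc 1 k).image (fun d : ℕ => (d : ℤ) - 1)) := by
  ext e
  simp only [Finset.mem_Icc, Finset.mem_insert, Finset.mem_image]
  constructor
  · rintro ⟨h0, hk2⟩
    rcases eq_or_lt_of_le hk2 with heq | hlt
    · exact Or.inl heq
    · exact Or.inr ⟨e.toNat + 1, ⟨by omega, by omega⟩, by omega⟩
  · rintro (rfl | ⟨d, ⟨hd1, hd2⟩, rfl⟩) <;> omega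

lemma prod_w (hk : 1 ≤ k) {f : Fin k → ℤ} (hf : f ∈ LukSteps k) :
    (∏ i, w k c a (f i))
      = (∏ d ∈ Finset.Icc 1 k,
            ((d : ℝ) * a d) ^ (Finset.univ.filter fun i => f i = (d : ℤ) - 1).card)
          * c ^ (Finset.univ.filter fun i => f i = (-1 : ℤ)).card := by
  have hmap : ∀ i ∈ (Finset.univ : Finset (Fin k)), f i ∈ Finset.Icc (-1 : ℤ) (k : ℤ) := by
    have h1 := (Finset.mem_filter.mp hf).1
    rw [Fintype.mem_piFinset] at h1
    exact fun i _ => h1 i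
  have hfib := Finset.prod_fiberwise_of_maps_to hmap (fun i => w k c a (f i))
  rw [← hfib]
  have hinner : ∀ e ∈ Finset.Icc (-1 : ℤ) (k : ℤ),
      (∏ i ∈ Finset.univ.filter (fun i => f i = e), w k c a (f i))
        = w k c a e ^ (Finset.univ.filter (fun i => f i = e)).card := by
    intro e _
    rw [Finset.prod_congr rfl (fun i hi => by rw [(Finset.mem_filter.mp hi).2]),
      Finset.prod_const]
  have hnk : (Finset.univ.filter fun i => f i = (k : ℤ)).card = 0 :=
    Finset.card_eq_zero.mpr (Finset.filter_eq_empty_iff.mpr fun i _ => no_step_k hf i)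
  have hkimg : (k : ℤ) ∉ (Finset.Icc 1 k).image (fun d : ℕ => (d : ℤ) - 1) := by
    simp only [Finset.mem_image, Finset.mem_Icc, not_exists]
    rintro d ⟨⟨hd1, hd2⟩, hcon⟩
    omega
  have hinj : ∀ x ∈ Finset.Icc 1 k, ∀ y ∈ Finset.Icc 1 k,
      (fun d : ℕ => (d : ℤ) - 1) x = (fun d : ℕ => (d : ℤ) - 1) y → x = y := by
    intro x _ y _ hxy
    simp only at hxy
    omega
  rw [Finset.prod_congr rfl hinner, hsplit, Finset.prod_insert (by simp), w_neg_one,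
    himg k hk, Finset.prod_insert hkimg, hnk, pow_zero, one_mul,
    Finset.prod_image hinj, mul_comm]
  congr 1
  refine Finset.prod_congr rfl fun d hd => ?_
  rw [w_step k c a d hd]

end TransferAux

/-- One-variable transfer identity: the constant term of `(U + c·L)^k (1)`, where `U` is
multiplication by `Σ_{d=1}^k d·a_d·x^{d-1}` and `L(x^m) = x^{m-1}`, `L(1) = 0`, equals
`Σ_{Γ ∈ L(k)} Π_{d=1}^k (d·a_d)^{n_d(Γ)} · c^{n_0(Γ)}`. -/
theorem transfer_identity (k : ℕ) (hk : 1 ≤ k) (c : ℝ) (a : ℕ → ℝ) :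
    (((fun p : Polynomial ℝ =>
          (∑ d ∈ Finset.Icc 1 k, ((d : ℝ) * a d) • Polynomial.X ^ (d - 1)) * p
            + c • p.divX)^[k]) 1).coeff 0
      = ∑ f ∈ LukSteps k,
          (∏ d ∈ Finset.Icc 1 k,
              ((d : ℝ) * a d) ^ (Finset.univ.filter fun i => f i = (d : ℤ) - 1).card)
            * c ^ (Finset.univ.filter fun i => f i = (-1 : ℤ)).card := by
  have hiter := TransferAux.coeff_iter k c a k 0
  rw [Nat.cast_zero] at hiter
  show ((TransferAux.T k c a)^[k] 1).coeff 0 = _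
  rw [hiter, TransferAux.pathSum, TransferAux.S_k_zero]
  exact Finset.sum_congr rfl fun f hf => TransferAux.prod_w k c a hk hf

end
end
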